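/- arXiv:1303.4652 — 3 statements merged into one kernel-verified Lean document; each statement's English description precedes it below -/
import Mathlib

section
/- (Causality of the inverse) Let U be a unitary on a fermionic lattice system such that (i) for every site x, U† a_x U and U† a†_x U are localized in the neighbourhood N(x) (odd polynomials in the creation/annihilation operators of modes in N(x)), and (ii) the neighbourhood relation is symmetric (x ∈ N(y) iff y ∈ N(x)). Then U a_x U† is localized in N(x) for every x; i.e., U† is also causal. -/
/- Conjugating by `U` transports anticommutation: `{U a U†, b} = U {a, U† b U} U†`. So if
`U† a_y U` anticommutes with `a_x` and `a†_x` (which holds when `x ∉ N y`, i.e. `y ∉ N x` by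
symmetry), then `U a_x U†` anticommutes with `a_y` and `a†_y`. -/

lemma anticomm_mul_mul_eq {R : Type*} [Semiring R] {u v : R} (huv : u * v = 1) (a b : R) :
    (u * a * v) * b + b * (u * a * v) = u * ((v * b * u) * a + a * (v * b * u)) * v := by
  have hleft : u * a * v * b = u * (a * (v * b * u)) * v := by
    simp only [mul_assoc, huv, mul_one]
  have hright : b * (u * a * v) = u * (v * b * u * a) * v := by
    simp only [← mul_assoc, huv, one_mul]
  rw [hleft, hright, mul_add, add_mul, add_comm]

lemma anticomm_mul_mul_of_anticomm {R : Type*} [Semiring R] {u v : R} (huv : u * v = 1)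
    {a b : R} (h : (v * b * u) * a + a * (v * b * u) = 0) :
    (u * a * v) * b + b * (u * a * v) = 0 := by
  rw [anticomm_mul_mul_eq huv, h, mul_zero, zero_mul]

/-- Causality of the inverse.  On a lattice of fermionic modes `a_x` with a
symmetric neighbourhood relation `N`, localization of an odd operator on a
region `R` is characterized by anticommutation with `a_y`, `a†_y` for all
`y ∉ R`.  If `U` is a causal unitary, i.e. `U† a_x U` and `U† a†_x U` are
localized on `N(x)` for every `x`, then `U a_x U†` is localized on `N(x)`
for every `x`; i.e. `U†` is also causal. -/
theorem inverse_of_causal_is_causal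
    {ι : Type*} {A : Type*} [Ring A] [StarRing A]
    (a : ι → A) (N : ι → Finset ι)
    (hsymm : ∀ x y, x ∈ N y ↔ y ∈ N x)
    (U : A)
    (hUunit : U * star U = 1 ∧ star U * U = 1)
    (hcausal : ∀ x, ∀ y ∉ N x,
      ((star U * a x * U) * a y + a y * (star U * a x * U) = 0 ∧
       (star U * a x * U) * star (a y) + star (a y) * (star U * a x * U) = 0) ∧
      ((star U * star (a x) * U) * a y + a y * (star U * star (a x) * U) = 0 ∧
       (star U * star (a x) * U) * star (a y) +
         star (a y) * (star U * star (a x) * U) = 0)) :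
    ∀ x, ∀ y ∉ N x,
      ((U * a x * star U) * a y + a y * (U * a x * star U) = 0 ∧
       (U * a x * star U) * star (a y) + star (a y) * (U * a x * star U) = 0) := by
  intro x y hy
  have hx : x ∉ N y := fun hxy => hy ((hsymm x y).mp hxy)
  obtain ⟨⟨hya, -⟩, hyastar, -⟩ := hcausal y x hx
  exact ⟨anticomm_mul_mul_of_anticomm hUunit.1 hya,
    anticomm_mul_mul_of_anticomm hUunit.1 hyastar⟩
end

section
/- Let a, b be fermionic annihilation operators of two distinct systems and let m₁, m₂ be Majorana operators of two further ancillary modes with M = i m₁ m₂. Then the modified hopping operator a† M b + b† M a commutes with M, and on any +1-eigenvector |ψ⟩ of M one has (a† M b + b† M a)|ψ⟩ = (a† b + b† a)|ψ⟩. -/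
/-! `M = i m₁ m₂` is a product of two operators each of which anticommutes with `a`, `b`, `a†`
and `b†`, so the two sign changes cancel and `M` commutes with all four. Hence
`a† M b + b† M a = (a† b + b† a) M`, which commutes with `M` and reduces to `a† b + b† a` on
the `+1`-eigenspace of `M`. -/

def AntiCommute {R : Type*} [Mul R] [Add R] [Zero R] (x y : R) : Prop :=
  x * y + y * x = 0

namespace AntiCommute

variable {R : Type*} {x y z : R}

theorem add_right [NonUnitalNonAssocSemiring R] (hy : AntiCommute x y) (hz : AntiCommute x z) :
    AntiCommute x (y + z) := by
  unfold AntiCommute at *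
  rw [mul_add, add_mul, add_add_add_comm, hy, hz, add_zero]

theorem star_star [NonUnitalSemiring R] [StarRing R] (h : AntiCommute x y) :
    AntiCommute (star x) (star y) := by
  unfold AntiCommute at *
  rw [add_comm, ← star_mul, ← star_mul, ← star_add, h, star_zero]

theorem star_left [NonUnitalSemiring R] [StarRing R] (h : AntiCommute x (star y)) :
    AntiCommute (star x) y := by
  simpa only [_root_.star_star] using h.star_star

theorem commute_mul [NonUnitalRing R] (hy : AntiCommute x y) (hz : AntiCommute x z) :
    Commute x (y * z) := by
  unfold Commute SemiconjBy
  rw [← mul_assoc, eq_neg_of_add_eq_zero_left hy, neg_mul, mul_assoc,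
    eq_neg_of_add_eq_zero_left hz, mul_neg, neg_neg, mul_assoc]

end AntiCommute

section Majorana

variable {R S : Type*} [NonUnitalRing R] [StarRing R] [SMul S R] [IsScalarTower S R R]
  [SMulCommClass S R R] {x c₁ c₂ : R}

theorem commute_smul_majorana_mul (t : S)
    (h₁ : AntiCommute x c₁) (h₁' : AntiCommute x (star c₁))
    (h₂ : AntiCommute x c₂) (h₂' : AntiCommute x (star c₂)) :
    Commute x (t • ((c₁ + star c₁) * (c₂ + star c₂))) :=
  ((h₁.add_right h₁').commute_mul (h₂.add_right h₂')).smul_right t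

theorem commute_star_smul_majorana_mul (t : S)
    (h₁ : AntiCommute x c₁) (h₁' : AntiCommute x (star c₁))
    (h₂ : AntiCommute x c₂) (h₂' : AntiCommute x (star c₂)) :
    Commute (star x) (t • ((c₁ + star c₁) * (c₂ + star c₂))) :=
  commute_smul_majorana_mul t h₁'.star_left h₁.star_star h₂'.star_left h₂.star_star

end Majorana

theorem hopping_eq_mul_of_commute {R : Type*} [Semigroup R] [Add R] [RightDistribClass R]
    {a b a' b' M : R} (ha : Commute a M) (hb : Commute b M) :
    a' * M * b + b' * M * a = (a' * b + b' * a) * M := by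
  rw [add_mul, mul_assoc a', ← hb.eq, mul_assoc b', ← ha.eq, ← mul_assoc, ← mul_assoc]

theorem modified_hopping_operator_general
    {E : Type*} [NormedAddCommGroup E] [InnerProductSpace ℂ E] [CompleteSpace E]
    (a b c₁ c₂ : E →L[ℂ] E)
    (hac : ∀ j ∈ ({c₁, c₂} : Set (E →L[ℂ] E)),
      (a * j + j * a = 0) ∧ (a * star j + star j * a = 0) ∧
      (b * j + j * b = 0) ∧ (b * star j + star j * b = 0))
    (m₁ m₂ M : E →L[ℂ] E)
    (hm₁ : m₁ = c₁ + star c₁) (hm₂ : m₂ = c₂ + star c₂)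
    (hM : M = Complex.I • (m₁ * m₂)) :
    (star a * M * b + star b * M * a) * M = M * (star a * M * b + star b * M * a) ∧
    ∀ ψ : E, M ψ = ψ →
      (star a * M * b + star b * M * a) ψ = (star a * b + star b * a) ψ := by
  obtain ⟨ha₁, ha₁', hb₁, hb₁'⟩ : AntiCommute a c₁ ∧ AntiCommute a (star c₁) ∧
      AntiCommute b c₁ ∧ AntiCommute b (star c₁) := hac c₁ (by simp)
  obtain ⟨ha₂, ha₂', hb₂, hb₂'⟩ : AntiCommute a c₂ ∧ AntiCommute a (star c₂) ∧
      AntiCommute b c₂ ∧ AntiCommute b (star c₂) := hac c₂ (by simp)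
  subst hM hm₁ hm₂
  have hMa := commute_smul_majorana_mul Complex.I ha₁ ha₁' ha₂ ha₂'
  have hMb := commute_smul_majorana_mul Complex.I hb₁ hb₁' hb₂ hb₂'
  have hMa' := commute_star_smul_majorana_mul Complex.I ha₁ ha₁' ha₂ ha₂'
  have hMb' := commute_star_smul_majorana_mul Complex.I hb₁ hb₁' hb₂ hb₂'
  rw [hopping_eq_mul_of_commute hMa hMb]
  refine ⟨(((hMa'.mul_left hMb).add_left (hMb'.mul_left hMa)).mul_left (.refl _)).eq, ?_⟩
  intro ψ hψ
  exact congrArg (star a * b + star b * a) hψ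

/-- The modified hopping operator `a† M b + b† M a`, with `M = i m₁ m₂` built
from Majorana operators `m_j = c_j + c_j†` of two ancillary fermionic modes,
commutes with `M`, and on any `+1`-eigenvector `ψ` of `M` it acts exactly as
the original hopping operator `a† b + b† a`. -/
theorem modified_hopping_operator
    {E : Type*} [NormedAddCommGroup E] [InnerProductSpace ℂ E] [CompleteSpace E]
    (a b c₁ c₂ : E →L[ℂ] E)
    (haa : a * star a + star a * a = 1) (hbb : b * star b + star b * b = 1)
    (h11 : c₁ * star c₁ + star c₁ * c₁ = 1)
    (h22 : c₂ * star c₂ + star c₂ * c₂ = 1)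
    (hasq : a * a = 0) (hbsq : b * b = 0)
    (h1sq : c₁ * c₁ = 0) (h2sq : c₂ * c₂ = 0)
    (hab : a * b + b * a = 0) (habd : a * star b + star b * a = 0)
    (hac : ∀ j ∈ ({c₁, c₂} : Set (E →L[ℂ] E)),
      (a * j + j * a = 0) ∧ (a * star j + star j * a = 0) ∧
      (b * j + j * b = 0) ∧ (b * star j + star j * b = 0))
    (h12 : c₁ * c₂ + c₂ * c₁ = 0)
    (h12d : c₁ * star c₂ + star c₂ * c₁ = 0)
    (m₁ m₂ M : E →L[ℂ] E)
    (hm₁ : m₁ = c₁ + star c₁) (hm₂ : m₂ = c₂ + star c₂)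
    (hM : M = Complex.I • (m₁ * m₂)) :
    (star a * M * b + star b * M * a) * M = M * (star a * M * b + star b * M * a) ∧
    ∀ ψ : E, M ψ = ψ →
      (star a * M * b + star b * M * a) ψ = (star a * b + star b * a) ψ :=
  modified_hopping_operator_general a b c₁ c₂ hac m₁ m₂ M hm₁ hm₂ hM
end

section
/- (Locality of conjugated swap under causal evolution) Let U be a unitary on the doubled fermionic lattice system that acts only on the copy modes b_x and is causal (U b_x U† is an odd operator localized on the neighbourhood N(x)). Then for each x, U S_x U† = exp[i(π/2)(b'†_x − a†_x)(b'_x − a_x)] with b'_x = U b_x U†, and U S_x U† is localized on N(x): it commutes with a_y, a†_y, b_y, b†_y for all y ∉ N(x). -/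
/-!
Conjugation by the unitary `U` is a ⋆-algebra automorphism that fixes every `a_x`, so it sends
the generator `(b†_x − a†_x)(b_x − a_x)` of `S_x` to `(b'†_x − a†_x)(b'_x − a_x)` and commutes
with `exp`. For `y ∉ N(x)`, each of `b'_x, b'†_x, a_x, a†_x` anticommutes with every mode
operator at `y`; hence so do both factors `b'_x − a_x` and `b'†_x − a†_x`, their product
commutes with it, and therefore so does its exponential.
-/

open NormedSpace

def Anticommute {R : Type*} [Ring R] (p g : R) : Prop :=
  p * g + g * p = 0

namespace Anticommute

variable {R : Type*} [Ring R] {p q g : R}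

theorem sub_left (hp : Anticommute p g) (hq : Anticommute q g) : Anticommute (p - q) g := by
  unfold Anticommute at *
  calc (p - q) * g + g * (p - q) = (p * g + g * p) - (q * g + g * q) := by noncomm_ring
    _ = 0 := by rw [hp, hq, sub_zero]

theorem star [StarRing R] (h : Anticommute p g) : Anticommute (star p) (star g) := by
  unfold Anticommute at *
  rw [← star_mul, ← star_mul, ← star_add, add_comm, h, star_zero]

theorem mul_left (hp : Anticommute p g) (hq : Anticommute q g) : Commute (p * q) g := by
  have hp' : p * g = -(g * p) := eq_neg_of_add_eq_zero_left hp
  have hq' : q * g = -(g * q) := eq_neg_of_add_eq_zero_left hq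
  calc p * q * g = -(p * g * q) := by rw [mul_assoc, hq', mul_neg, mul_assoc]
    _ = g * (p * q) := by rw [hp', neg_mul, neg_neg, mul_assoc]

end Anticommute

section FermionicSwap

variable {A : Type*} [NormedRing A] [StarRing A] [NormedAlgebra ℂ A]

noncomputable def fermionicSwap (a b : A) : A :=
  exp ((Complex.I * (Real.pi / 2 : ℝ)) • ((star b - star a) * (b - a)))

theorem fermionicSwap_commute {a b g : A}
    (hbg : Anticommute b g) (hbg' : Anticommute b (star g))
    (hag : Anticommute a g) (hag' : Anticommute a (star g)) :
    Commute (fermionicSwap a b) g := by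
  have hstar : Anticommute (star b - star a) g := by
    simpa only [star_star] using hbg'.star.sub_left hag'.star
  exact ((hstar.mul_left (hbg.sub_left hag)).smul_left _).exp_left

theorem fermionicSwap_commute_and_star {a b g : A}
    (hbg : Anticommute b g) (hbg' : Anticommute b (star g))
    (hag : Anticommute a g) (hag' : Anticommute a (star g)) :
    Commute (fermionicSwap a b) g ∧ Commute (fermionicSwap a b) (star g) := by
  refine ⟨fermionicSwap_commute hbg hbg' hag hag', fermionicSwap_commute hbg' ?_ hag' ?_⟩ <;>
    rwa [star_star]

theorem unitary_conj_fermionicSwap [CompleteSpace A] (u : unitary A) (a b : A) :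
    u * fermionicSwap a b * star (u : A) =
      fermionicSwap (u * a * star (u : A)) (u * b * star (u : A)) := by
  let : NormedAlgebra ℚ A := .restrictScalars ℚ ℂ A
  have hconj := exp_units_conj (Unitary.toUnits u)
    ((Complex.I * (Real.pi / 2 : ℝ)) • ((star b - star a) * (b - a)))
  have hφ := map_smul (Unitary.conjStarAlgAut ℂ A u) (Complex.I * (Real.pi / 2 : ℝ))
    ((star b - star a) * (b - a))
  simp only [map_mul, map_sub, map_star, Unitary.conjStarAlgAut_apply] at hφ
  exact hconj.symm.trans (congrArg exp hφ)

end FermionicSwap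

theorem conjugated_swap_is_local_general
    {ι : Type*} {A : Type*} [NormedRing A] [StarRing A] [NormedAlgebra ℂ A]
    [CompleteSpace A]
    (a b : ι → A) (N : ι → Finset ι) (hNx : ∀ x, x ∈ N x)
    (ha : ∀ x y, a x * a y + a y * a x = 0)
    (haad : ∀ x y, x ≠ y → a x * star (a y) + star (a y) * a x = 0)
    (hab : ∀ x y, a x * b y + b y * a x = 0)
    (habd : ∀ x y, a x * star (b y) + star (b y) * a x = 0)
    (U : A) (hUunit : U * star U = 1 ∧ star U * U = 1)
    (hUa : ∀ x, U * a x = a x * U)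
    (hlocal : ∀ x, ∀ y ∉ N x,
      ((U * b x * star U) * a y + a y * (U * b x * star U) = 0) ∧
      ((U * b x * star U) * star (a y) + star (a y) * (U * b x * star U) = 0) ∧
      ((U * b x * star U) * b y + b y * (U * b x * star U) = 0) ∧
      ((U * b x * star U) * star (b y) + star (b y) * (U * b x * star U) = 0))
    (S : ι → A)
    (hS : ∀ x, S x = exp ((Complex.I * (Real.pi / 2 : ℝ)) •
      ((star (b x) - star (a x)) * (b x - a x)))) :
    ∀ x,
      U * S x * star U =
        exp ((Complex.I * (Real.pi / 2 : ℝ)) •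
          ((star (U * b x * star U) - star (a x)) * ((U * b x * star U) - a x))) ∧
      ∀ y ∉ N x,
        (U * S x * star U) * a y = a y * (U * S x * star U) ∧
        (U * S x * star U) * star (a y) = star (a y) * (U * S x * star U) ∧
        (U * S x * star U) * b y = b y * (U * S x * star U) ∧
        (U * S x * star U) * star (b y) = star (b y) * (U * S x * star U) := by
  intro x
  have hax : U * a x * star U = a x := by rw [hUa, mul_assoc, hUunit.1, mul_one]
  have hconj : U * S x * star U = fermionicSwap (a x) (U * b x * star U) := by
    have h := unitary_conj_fermionicSwap ⟨U, hUunit.2, hUunit.1⟩ (a x) (b x)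
    dsimp only at h
    rw [hax] at h
    rwa [hS x]
  refine ⟨hconj, fun y hy => ?_⟩
  have hxy : x ≠ y := fun h => hy (h ▸ hNx x)
  obtain ⟨hba, hbad, hbb, hbbd⟩ := hlocal x y hy
  rw [hconj]
  obtain ⟨hcomm_a, hcomm_ad⟩ := fermionicSwap_commute_and_star hba hbad (ha x y) (haad x y hxy)
  obtain ⟨hcomm_b, hcomm_bd⟩ := fermionicSwap_commute_and_star hbb hbbd (hab x y) (habd x y)
  exact ⟨hcomm_a, hcomm_ad, hcomm_b, hcomm_bd⟩

/-- Locality of the conjugated swap under a causal evolution acting on the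
copy modes: if `U` is a unitary commuting with all the original modes `a_x`,
and `b'_x = U b_x U†` is an odd operator localized on the neighbourhood
`N(x)` (it anticommutes with `a_y, a†_y, b_y, b†_y` for all `y ∉ N(x)`),
then `U S_x U† = exp[i(π/2)(b'†_x − a†_x)(b'_x − a_x)]`, and this operator is
localized on `N(x)`: it commutes with `a_y, a†_y, b_y, b†_y` for all
`y ∉ N(x)`. -/
theorem conjugated_swap_is_local
    {ι : Type*} {A : Type*} [NormedRing A] [StarRing A] [NormedAlgebra ℂ A]
    [StarModule ℂ A] [CompleteSpace A]
    (a b : ι → A) (N : ι → Finset ι) (hNx : ∀ x, x ∈ N x)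
    (ha : ∀ x y, a x * a y + a y * a x = 0)
    (haad : ∀ x y, x ≠ y → a x * star (a y) + star (a y) * a x = 0)
    (hb : ∀ x y, b x * b y + b y * b x = 0)
    (hbbd : ∀ x y, x ≠ y → b x * star (b y) + star (b y) * b x = 0)
    (hab : ∀ x y, a x * b y + b y * a x = 0)
    (habd : ∀ x y, a x * star (b y) + star (b y) * a x = 0)
    (U : A) (hUunit : U * star U = 1 ∧ star U * U = 1)
    (hUa : ∀ x, U * a x = a x * U) (hUad : ∀ x, U * star (a x) = star (a x) * U)
    (hlocal : ∀ x, ∀ y ∉ N x,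
      ((U * b x * star U) * a y + a y * (U * b x * star U) = 0) ∧
      ((U * b x * star U) * star (a y) + star (a y) * (U * b x * star U) = 0) ∧
      ((U * b x * star U) * b y + b y * (U * b x * star U) = 0) ∧
      ((U * b x * star U) * star (b y) + star (b y) * (U * b x * star U) = 0))
    (S : ι → A)
    (hS : ∀ x, S x = exp ((Complex.I * (Real.pi / 2 : ℝ)) •
      ((star (b x) - star (a x)) * (b x - a x)))) :
    ∀ x,
      U * S x * star U =
        exp ((Complex.I * (Real.pi / 2 : ℝ)) •
          ((star (U * b x * star U) - star (a x)) * ((U * b x * star U) - a x))) ∧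
      ∀ y ∉ N x,
        (U * S x * star U) * a y = a y * (U * S x * star U) ∧
        (U * S x * star U) * star (a y) = star (a y) * (U * S x * star U) ∧
        (U * S x * star U) * b y = b y * (U * S x * star U) ∧
        (U * S x * star U) * star (b y) = star (b y) * (U * S x * star U) :=
  conjugated_swap_is_local_general a b N hNx ha haad hab habd U hUunit hUa hlocal S hS
end
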